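/- Let H = [[f,u],[g,v]] with entries in L^∞. Then the generalized Cauchy singular integral operator R_H is an isometry on L² if and only if both of the following hold: (1) |f| = |v| = 1 almost everywhere; (2) either (a) f, g, conj(u), conj(v) ∈ H^∞, or (b) there exists a unimodular constant λ such that f − λg, conj(u) − conj(λ)·conj(v), and f·conj(v) all lie in H^∞. -/

import Mathlib

noncomputable section

open MeasureTheory Complex ComplexConjugate InnerProductSpace ContinuousLinearMap

namespace GSIO

instance : Fact (0 < 2 * Real.pi) := ⟨by positivity⟩

/-- The circle, modeled as `ℝ / 2πℤ`. -/
abbrev Circ : Type := AddCircle (2 * Real.pi)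

/-- Normalized Haar (arc-length) measure on the circle. -/
abbrev μC : Measure Circ := AddCircle.haarAddCircle

/-- `L²` of the circle. -/
abbrev L2 : Type := Lp ℂ 2 μC

/-- `L^∞` of the circle. -/
abbrev Linf : Type := Lp ℂ ⊤ μC

/-- The Hardy space `H²`: those `L²` functions whose negative Fourier coefficients vanish. -/
def Hardy : Submodule ℂ L2 where
  carrier := {f : L2 | ∀ n : ℤ, n < 0 → fourierCoeff (f : Circ → ℂ) n = 0}
  zero_mem' := by
    intro n hn
    rw [← fourierBasis_repr]
    simp
  add_mem' := by
    intro a b ha hb n hn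
    have ha' := ha n hn
    have hb' := hb n hn
    rw [← fourierBasis_repr] at ha' hb' ⊢
    rw [map_add, lp.coeFn_add, Pi.add_apply, ha', hb', add_zero]
  smul_mem' := by
    intro c a ha n hn
    have ha' := ha n hn
    rw [← fourierBasis_repr] at ha' ⊢
    rw [_root_.map_smul, lp.coeFn_smul, Pi.smul_apply, ha', smul_zero]

theorem isClosed_Hardy : IsClosed (Hardy : Set L2) := by
  have h : (Hardy : Set L2) =
      ⋂ n : {m : ℤ // m < 0}, (fun f : L2 =>
        (innerSL ℂ (fourierBasis (T := 2 * Real.pi) n.1)) f) ⁻¹' {0} := by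
    ext f
    simp only [Set.mem_iInter, Set.mem_preimage, Set.mem_singleton_iff, SetLike.mem_coe]
    constructor
    · intro hf n
      have h1 := hf n.1 n.2
      rw [← fourierBasis_repr, fourierBasis.repr_apply_apply] at h1
      simpa using h1
    · intro hf n hn
      have h1 := hf ⟨n, hn⟩
      rw [← fourierBasis_repr, fourierBasis.repr_apply_apply]
      simpa using h1
  rw [h]
  exact isClosed_iInter fun n =>
    isClosed_singleton.preimage (innerSL ℂ _).continuous

instance : CompleteSpace Hardy := isClosed_Hardy.completeSpace_coe

/-- The Riesz projection `P₊`, i.e. the orthogonal projection of `L²` onto `H²`. -/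
def Pp : L2 →L[ℂ] L2 := Hardy.subtypeL.comp Hardy.orthogonalProjectionOnto

/-- `P₋ = I − P₊`. -/
def Pm : L2 →L[ℂ] L2 := ContinuousLinearMap.id ℂ L2 - Pp

/-- The pointwise product of an `L^∞` function with an `L²` function, as an `L²` function. -/
def mulFun (φ : Linf) (x : L2) : L2 :=
  ((Lp.memLp x).smul (r := 2) (Lp.memLp φ)).toLp ((φ : Circ → ℂ) • (x : Circ → ℂ))

theorem mulFun_add (φ : Linf) (x y : L2) : mulFun φ (x + y) = mulFun φ x + mulFun φ y := by
  rw [mulFun, mulFun, mulFun, ← MemLp.toLp_add]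
  apply MemLp.toLp_congr
  filter_upwards [Lp.coeFn_add x y] with t ht
  have ht' : ((x + y : L2) : Circ → ℂ) t = (x : Circ → ℂ) t + (y : Circ → ℂ) t := by
    simpa using ht
  simp only [Pi.mul_apply, Pi.smul_apply, Pi.add_apply, smul_eq_mul, ht']
  ring

theorem mulFun_smul (c : ℂ) (φ : Linf) (x : L2) : mulFun φ (c • x) = c • mulFun φ x := by
  rw [mulFun, mulFun, ← MemLp.toLp_const_smul]
  apply MemLp.toLp_congr
  filter_upwards [Lp.coeFn_smul c x] with t ht
  have ht' : ((c • x : L2) : Circ → ℂ) t = c * (x : Circ → ℂ) t := by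
    simpa using ht
  simp only [Pi.mul_apply, Pi.smul_apply, smul_eq_mul, ht']
  ring

theorem norm_mulFun_le (φ : Linf) (x : L2) : ‖mulFun φ x‖ ≤ ‖φ‖ * ‖x‖ := by
  rw [mulFun, Lp.norm_toLp]
  have h := eLpNorm_smul_le_eLpNorm_top_mul_eLpNorm (μ := μC) 2
    (Lp.aestronglyMeasurable x) (φ : Circ → ℂ)
  refine le_trans (ENNReal.toReal_mono ?_ h) ?_
  · exact ENNReal.mul_ne_top (Lp.eLpNorm_ne_top φ) (Lp.eLpNorm_ne_top x)
  · rw [ENNReal.toReal_mul, Lp.norm_def, Lp.norm_def]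

/-- The multiplication operator `M_φ` on `L²`, for `φ ∈ L^∞`. -/
def mul (φ : Linf) : L2 →L[ℂ] L2 :=
  LinearMap.mkContinuous
    { toFun := mulFun φ
      map_add' := mulFun_add φ
      map_smul' := fun c x => mulFun_smul c φ x }
    ‖φ‖ (fun x => norm_mulFun_le φ x)

/-- Pointwise product in `L^∞`. -/
def mulInf (φ ψ : Linf) : Linf :=
  ((Lp.memLp ψ).smul (r := ⊤) (Lp.memLp φ)).toLp ((φ : Circ → ℂ) • (ψ : Circ → ℂ))

/-- Complex conjugation on `L^∞`. -/
def conjInf (φ : Linf) : Linf :=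
  (show MemLp (fun t => star ((φ : Circ → ℂ) t)) ⊤ μC from
    ⟨continuous_star.comp_aestronglyMeasurable (Lp.aestronglyMeasurable φ), by
      rw [eLpNorm_congr_norm_ae (g := (φ : Circ → ℂ))
        (Filter.Eventually.of_forall fun t => norm_star _)]
      exact Lp.eLpNorm_lt_top φ⟩).toLp _

/-- Complex conjugation on `L²`. -/
def conjL2 (x : L2) : L2 :=
  (show MemLp (fun t => star ((x : Circ → ℂ) t)) 2 μC from
    ⟨continuous_star.comp_aestronglyMeasurable (Lp.aestronglyMeasurable x), by
      rw [eLpNorm_congr_norm_ae (g := (x : Circ → ℂ))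
        (Filter.Eventually.of_forall fun t => norm_star _)]
      exact Lp.eLpNorm_lt_top x⟩).toLp _

/-- The inclusion `L^∞ ⊆ L²` (the measure is finite). -/
def toL2 (φ : Linf) : L2 := ((Lp.memLp φ).mono_exponent le_top).toLp φ

/-- The constant function `c` as an element of `L^∞`. -/
def constInf (c : ℂ) : Linf := (memLp_const c).toLp (fun _ => c)

/-- An `L^∞` function is constant (a.e.). -/
def IsConst (φ : Linf) : Prop := ∃ c : ℂ, φ = constInf c

/-- `φ ∈ H^∞ = L^∞ ∩ H²`: the negative Fourier coefficients of `φ` vanish. -/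
def MemHinf (φ : Linf) : Prop := ∀ n : ℤ, n < 0 → fourierCoeff (φ : Circ → ℂ) n = 0

/-- The coordinate function `z` as an element of `L^∞`. -/
def zInf : Linf := fourierLp (T := 2 * Real.pi) ⊤ 1

/-- The function `z̄` as an element of `L^∞`. -/
def zbarInf : Linf := fourierLp (T := 2 * Real.pi) ⊤ (-1)

/-- The antiunitary operator `V : h ↦ z̄ ⬝ conj h` on `L²`. -/
def Vmap (x : L2) : L2 := mul zbarInf (conjL2 x)

/-- `φ₋ = P₋ φ` for `φ ∈ L^∞`, viewed inside `L²`. -/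
def mI (φ : Linf) : L2 := Pm (toL2 φ)

/-- The rank-one operator `p ⊗ q : x ↦ ⟪x, q⟫ · p` (the inner product being conjugate-linear
in `q`). -/
def rankOne {E : Type*} [NormedAddCommGroup E] [InnerProductSpace ℂ E] (p q : E) : E →L[ℂ] E :=
  (innerSL ℂ q).smulRight p

/-- The Hilbert space direct sum `L² ⊕ L²`. -/
abbrev L2sq : Type := WithLp 2 (L2 × L2)

/-- A pair of `L²` functions, viewed as a vector in `L² ⊕ L²`. -/
def pair (x y : L2) : L2sq := (WithLp.equiv 2 (L2 × L2)).symm (x, y)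

/-- Notation for the pointwise product in `L^∞`. -/
scoped infixl:70 " ⊙ " => GSIO.mulInf

/-- The Toeplitz operator `T_φ = P₊ M_φ P₊` (viewed as acting on the corner `H²` of `L²`). -/
def Toeplitz (φ : Linf) : L2 →L[ℂ] L2 := Pp ∘L mul φ ∘L Pp

/-- The Hankel operator `H_φ = P₋ M_φ P₊ : H² → (H²)^⊥` (as a corner operator on `L²`). -/
def Hankel (φ : Linf) : L2 →L[ℂ] L2 := Pm ∘L mul φ ∘L Pp

/-- The dual Toeplitz operator `T̃_φ = P₋ M_φ P₋` on `(H²)^⊥` (as a corner operator on `L²`). -/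
def dualToeplitz (φ : Linf) : L2 →L[ℂ] L2 := Pm ∘L mul φ ∘L Pm

/-- The generalized Cauchy singular integral operator with symbol `[[f, u], [g, v]]`:
`R x = P₊ f P₊ x + P₋ g P₊ x + P₊ u P₋ x + P₋ v P₋ x`. -/
def Rop (f u g v : Linf) : L2 →L[ℂ] L2 :=
  Pp ∘L mul f ∘L Pp + Pm ∘L mul g ∘L Pp + Pp ∘L mul u ∘L Pm + Pm ∘L mul v ∘L Pm

/-- The singular integral operator `S_{f,g} = M_f P₊ + M_g P₋` on `L²`. -/
def Sop (f g : Linf) : L2 →L[ℂ] L2 := mul f ∘L Pp + mul g ∘L Pm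



/-- Negation `t ↦ -t` preserves the Haar measure of the circle. -/
theorem mp_neg : MeasurePreserving (fun t : Circ => -t) μC μC :=
  Measure.measurePreserving_neg μC

/-- Composition with `t ↦ -t` on `L²`. -/
def reflL2 : L2 →L[ℂ] L2 :=
  (Lp.compMeasurePreservingₗᵢ ℂ (fun t : Circ => -t) mp_neg).toContinuousLinearMap

/-- Composition with `t ↦ -t` on `L^∞`: for `φ ∈ L^∞`, `φ̃(z) = φ(z̄)`. -/
def reflInf (φ : Linf) : Linf := Lp.compMeasurePreserving (fun t : Circ => -t) mp_neg φ

/-- `φ* (z) = conj (φ(z̄))`. -/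
def starInf (φ : Linf) : Linf := conjInf (reflInf φ)

/-- The flip operator `J : (Jh)(z) = z̄ · h(z̄)` on `L²`. -/
def Jop : L2 →L[ℂ] L2 := mul zbarInf ∘L reflL2

/-- The Hankel operator `𝕳_φ = P₊ M_φ J` on `H²` (as a corner operator on `L²`). -/
def HankelPlus (φ : Linf) : L2 →L[ℂ] L2 := Pp ∘L mul φ ∘L Jop ∘L Pp

/-- The adjoint `H*_φ` of the Hankel operator `H_φ`. -/
def HankelAdj (φ : Linf) : L2 →L[ℂ] L2 := ContinuousLinearMap.adjoint (Hankel φ)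

/-- `θ ∈ L^∞` is an inner function: `θ ∈ H^∞` and `|θ| = 1` a.e. -/
def IsInner (θ : Linf) : Prop := MemHinf θ ∧ ∀ᵐ t ∂μC, ‖(θ : Circ → ℂ) t‖ = 1

/-- The orthogonal projection of `L²` onto `K_θ^⊥ = θH² ⊕ z̄·conj(H²)`, namely
`P₋ + M_θ P₊ M_{conj θ}`. -/
def Qproj (θ : Linf) : L2 →L[ℂ] L2 := Pm + mul θ ∘L Pp ∘L mul (conjInf θ)

/-!
Write `e m = zᵐ` for the Fourier basis. Off the lines `k = -1` and `m = -1`, the matrix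
`⟪e k, R (e m)⟫` of `R = R_{[[f,u],[g,v]]}` is invariant under the diagonal shift
`(k, m) ↦ (k + 1, m + 1)`. Comparing the Gram entries `⟪R e (m+1), R e (n+1)⟫` and
`⟪R e m, R e n⟫` of an isometry therefore shows that the boundary sequences
`α = (f̂ on ℤ<0, û on ℤ>0)` and `β = (ĝ on ℤ<0, v̂ on ℤ>0)` have the same Gram matrix,
`conj (α i) * α j = conj (β i) * β j`, so `α = λβ` for a unimodular `λ`; this is
`f - λg, ū - λ̄v̄ ∈ H^∞`.

Given `α = λβ`, the Fourier coefficients of `R (e m)` are those of `f · e m` (for `m ≥ 0`),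
resp. `λ v · e m` (for `m < 0`), times the unimodular multiplier of `P₊ + λ̄P₋`. Hence the
Gram matrix of `R` is made of the Fourier coefficients of `|f|²`, `|v|²` and `λ̄ f v̄`, and it is
the identity iff `|f| = |v| = 1` and `f v̄ ∈ H^∞`. Alternative (a) is the case `λ = 1` of (b).
-/

theorem tsum_add_eq_of_shift {α : Type*} [AddCommGroup α] [TopologicalSpace α]
    [IsTopologicalAddGroup α] [T2Space α] {a a' : ℤ → α} (ha : Summable a) (ha' : Summable a')
    {j : ℤ} (h : ∀ k ≠ j, a' (k + 1) = a k) :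
    ∑' k, a' k + a j = ∑' k, a k + a' (j + 1) := by
  have hrest : ∑' k, (if k = j + 1 then 0 else a' k) = ∑' k, if k = j then 0 else a k := by
    rw [← (Equiv.addRight (1 : ℤ)).tsum_eq]
    refine tsum_congr fun k => ?_
    by_cases hk : k = j
    · simp [hk]
    · simp [hk, h k hk]
  rw [ha.tsum_eq_add_tsum_ite j, ha'.tsum_eq_add_tsum_ite (j + 1), hrest]
  abel

section HilbertBasis

variable {𝕜 E ι : Type*} [RCLike 𝕜] [NormedAddCommGroup E] [InnerProductSpace 𝕜 E]

theorem _root_.HilbertBasis.inner_eq_tsum_repr (b : HilbertBasis ι 𝕜 E) (x y : E) :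
    ⟪x, y⟫_𝕜 = ∑' i, conj (b.repr x i) * b.repr y i := by
  rw [← b.tsum_inner_mul_inner]
  simp only [b.repr_apply_apply, inner_conj_symm]

theorem _root_.HilbertBasis.summable_conj_repr_mul_repr (b : HilbertBasis ι 𝕜 E) (x y : E) :
    Summable fun i => conj (b.repr x i) * b.repr y i := by
  simpa only [b.repr_apply_apply, inner_conj_symm] using b.summable_inner_mul_inner x y

theorem _root_.HilbertBasis.norm_map_eq_iff_orthonormal [CompleteSpace E]
    (b : HilbertBasis ι 𝕜 E) (R : E →L[𝕜] E) :
    (∀ x, ‖R x‖ = ‖x‖) ↔ Orthonormal 𝕜 (R ∘ b) := by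
  classical
  rw [R.norm_map_iff_adjoint_comp_self, orthonormal_iff_ite]
  have hb := orthonormal_iff_ite.mp b.orthonormal
  constructor
  · intro h i j
    rw [Function.comp_apply, Function.comp_apply, ← adjoint_inner_right, ← comp_apply, h,
      one_apply_eq_self, hb]
  · intro h
    refine ext_on (Submodule.dense_iff_topologicalClosure_eq_top.mpr b.dense_span) ?_
    rintro - ⟨j, rfl⟩
    refine b.repr.injective (lp.ext (funext fun i => ?_))
    rw [b.repr_apply_apply, b.repr_apply_apply, comp_apply, adjoint_inner_right,
      one_apply_eq_self, hb]
    exact h i j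

theorem _root_.HilbertBasis.inner_eq_mul_inner_of_repr (b : HilbertBasis ι 𝕜 E)
    {x y x' y' : E} {ε ε' : ι → 𝕜} {κ : 𝕜} (hκ : ∀ i, conj (ε i) * ε' i = κ)
    (hx : ∀ i, b.repr x' i = ε i * b.repr x i) (hy : ∀ i, b.repr y' i = ε' i * b.repr y i) :
    ⟪x', y'⟫_𝕜 = κ * ⟪x, y⟫_𝕜 := by
  rw [b.inner_eq_tsum_repr, b.inner_eq_tsum_repr, ← tsum_mul_left]
  refine tsum_congr fun i => ?_
  rw [hx, hy, map_mul, ← hκ i]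
  ring

theorem _root_.HilbertBasis.inner_add_eq_of_shift (b : HilbertBasis ℤ 𝕜 E) {x y x' y' : E}
    {j : ℤ} (hx : ∀ k ≠ j, b.repr x' (k + 1) = b.repr x k)
    (hy : ∀ k ≠ j, b.repr y' (k + 1) = b.repr y k) :
    ⟪x', y'⟫_𝕜 + conj (b.repr x j) * b.repr y j =
      ⟪x, y⟫_𝕜 + (conj (b.repr x' (j + 1)) : 𝕜) * b.repr y' (j + 1) := by
  rw [b.inner_eq_tsum_repr, b.inner_eq_tsum_repr]
  exact tsum_add_eq_of_shift (b.summable_conj_repr_mul_repr x y)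
    (b.summable_conj_repr_mul_repr x' y') fun k hk => by rw [hx k hk, hy k hk]

theorem _root_.Orthonormal.conj_repr_mul_eq_of_shift (b : HilbertBasis ℤ 𝕜 E) {w : ℤ → E}
    (hw : Orthonormal 𝕜 w) {j : ℤ}
    (hshift : ∀ m k, m ≠ j → k ≠ j → b.repr (w (m + 1)) (k + 1) = b.repr (w m) k)
    {m n : ℤ} (hm : m ≠ j) (hn : n ≠ j) :
    (conj (b.repr (w (m + 1)) (j + 1)) : 𝕜) * b.repr (w (n + 1)) (j + 1) =
      conj (b.repr (w m) j) * b.repr (w n) j := by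
  classical
  have h := b.inner_add_eq_of_shift (fun k hk => hshift m k hm hk) fun k hk => hshift n k hn hk
  simp only [orthonormal_iff_ite.mp hw, add_left_inj] at h
  exact ((add_right_inj _).mp h).symm

theorem exists_norm_eq_one_forall_eq_mul {S : Set ι} {α β : ι → 𝕜}
    (h : ∀ i ∈ S, ∀ j ∈ S, conj (α i) * α j = conj (β i) * β j) :
    ∃ c : 𝕜, ‖c‖ = 1 ∧ ∀ i ∈ S, α i = c * β i := by
  have hnorm : ∀ i ∈ S, ‖α i‖ = ‖β i‖ := fun i hi => by
    have := h i hi i hi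
    rw [RCLike.conj_mul, RCLike.conj_mul] at this
    exact (pow_left_inj₀ (norm_nonneg _) (norm_nonneg _) two_ne_zero).mp (mod_cast this)
  by_cases hβ : ∀ i ∈ S, β i = 0
  · refine ⟨1, norm_one, fun i hi => ?_⟩
    rw [hβ i hi, mul_zero, ← norm_eq_zero, hnorm i hi, hβ i hi, norm_zero]
  · push Not at hβ
    obtain ⟨i₀, hi₀, hβ₀⟩ := hβ
    have hα₀ : conj (α i₀) ≠ 0 := by
      rw [map_ne_zero, ← norm_ne_zero_iff, hnorm i₀ hi₀, norm_ne_zero_iff]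
      exact hβ₀
    refine ⟨conj (β i₀) / conj (α i₀), ?_, fun j hj => ?_⟩
    · rw [norm_div, RCLike.norm_conj, RCLike.norm_conj, hnorm i₀ hi₀,
        div_self (norm_ne_zero_iff.mpr hβ₀)]
    · rw [div_mul_eq_mul_div, eq_div_iff hα₀, mul_comm, h i₀ hi₀ j hj]

end HilbertBasis

abbrev e : HilbertBasis ℤ ℂ L2 := fourierBasis

theorem repr_e (m k : ℤ) : e.repr (e m) k = if k = m then 1 else 0 := by
  rw [e.repr_apply_apply]
  exact orthonormal_iff_ite.mp e.orthonormal k m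

theorem coeFn_e (m : ℤ) : (e m : Circ → ℂ) =ᵐ[μC] fourier m := by
  rw [coe_fourierBasis]
  exact coeFn_fourierLp 2 m

theorem coeFn_mul (φ : Linf) (x : L2) :
    (mul φ x : Circ → ℂ) =ᵐ[μC] fun t => φ t * x t := by
  show (mulFun φ x : Circ → ℂ) =ᵐ[μC] _
  exact MemLp.coeFn_toLp _

theorem coeFn_toL2 (φ : Linf) : (toL2 φ : Circ → ℂ) =ᵐ[μC] φ :=
  MemLp.coeFn_toLp _

theorem coeFn_conjInf (φ : Linf) : (conjInf φ : Circ → ℂ) =ᵐ[μC] fun t => conj (φ t) :=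
  MemLp.coeFn_toLp _

theorem coeFn_mulInf (φ ψ : Linf) : (φ ⊙ ψ : Circ → ℂ) =ᵐ[μC] fun t => φ t * ψ t :=
  MemLp.coeFn_toLp _

theorem conjInf_conjInf (φ : Linf) : conjInf (conjInf φ) = φ := by
  refine Lp.ext ?_
  filter_upwards [coeFn_conjInf (conjInf φ), coeFn_conjInf φ] with t h₁ h₂
  rw [h₁, h₂, conj_conj]

theorem fourierCoeff_sub (φ ψ : Linf) (n : ℤ) :
    fourierCoeff (φ - ψ) n = fourierCoeff φ n - fourierCoeff ψ n := by
  have hφ : Integrable φ μC := (Lp.memLp φ).integrable le_top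
  have hψ : Integrable ψ μC := (Lp.memLp ψ).integrable le_top
  rw [fourierCoeff_congr_ae (Lp.coeFn_sub φ ψ), sub_eq_add_neg,
    ← neg_one_smul ℂ (ψ : Circ → ℂ), fourierCoeff.add hφ (hψ.smul _), Pi.add_apply,
    fourierCoeff.const_smul, neg_one_smul, ← sub_eq_add_neg]

theorem fourierCoeff_smul (c : ℂ) (φ : Linf) (n : ℤ) :
    fourierCoeff (c • φ) n = c * fourierCoeff φ n := by
  rw [fourierCoeff_congr_ae (Lp.coeFn_smul c φ), fourierCoeff.const_smul, smul_eq_mul]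

theorem fourierCoeff_conjInf (φ : Linf) (n : ℤ) :
    fourierCoeff (conjInf φ) n = conj (fourierCoeff φ (-n)) := by
  rw [fourierCoeff_congr_ae (coeFn_conjInf φ), fourierCoeff, fourierCoeff, ← integral_conj]
  refine integral_congr_ae (Filter.Eventually.of_forall fun t => ?_)
  simp only [smul_eq_mul, map_mul, neg_neg, ← fourier_neg]

theorem repr_mul_e (φ : Linf) (m k : ℤ) : e.repr (mul φ (e m)) k = fourierCoeff φ (k - m) := by
  have h : (mul φ (e m) : Circ → ℂ) =ᵐ[μC] fun t => fourier m t * φ t := by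
    filter_upwards [coeFn_mul φ (e m), coeFn_e m] with t h₁ h₂
    rw [h₁, h₂, mul_comm]
  rw [fourierBasis_repr, fourierCoeff_congr_ae h, fourierCoeff, fourierCoeff,
    show -(k - m) = -k + m by ring]
  refine integral_congr_ae (Filter.Eventually.of_forall fun t => ?_)
  simp only [smul_eq_mul, fourier_add, mul_assoc]

theorem inner_mul_e_mul_e (φ ψ : Linf) (m n : ℤ) :
    ⟪mul φ (e m), mul ψ (e n)⟫_ℂ = fourierCoeff (ψ ⊙ conjInf φ) (m - n) := by
  rw [L2.inner_def, fourierCoeff]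
  refine integral_congr_ae ?_
  filter_upwards [coeFn_mul φ (e m), coeFn_mul ψ (e n), coeFn_e m, coeFn_e n,
    coeFn_mulInf ψ (conjInf φ), coeFn_conjInf φ] with t h₁ h₂ h₃ h₄ h₅ h₆
  rw [RCLike.inner_apply, h₁, h₂, h₃, h₄, h₅, h₆, map_mul, ← fourier_neg,
    show -(m - n) = -m + n by ring, fourier_add, smul_eq_mul]
  ring

theorem MemHinf.sub {φ ψ : Linf} (hφ : MemHinf φ) (hψ : MemHinf ψ) : MemHinf (φ - ψ) :=
  fun n hn => by rw [fourierCoeff_sub, hφ n hn, hψ n hn, sub_zero]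

theorem MemHinf.const_smul {φ : Linf} (hφ : MemHinf φ) (c : ℂ) : MemHinf (c • φ) :=
  fun n hn => by rw [fourierCoeff_smul, hφ n hn, mul_zero]

/-- By Parseval, the `d`-th coefficient of `φψ` is the convolution `∑ₖ φ̂(k) ψ̂(d - k)`, and
for `d < 0` one of the two factors vanishes in every term. -/
theorem MemHinf.mul {φ ψ : Linf} (hφ : MemHinf φ) (hψ : MemHinf ψ) : MemHinf (φ ⊙ ψ) := by
  intro d hd
  rw [← conjInf_conjInf ψ, ← sub_zero d, ← inner_mul_e_mul_e, e.inner_eq_tsum_repr]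
  refine (tsum_congr fun k => ?_).trans tsum_zero
  rw [repr_mul_e, repr_mul_e, fourierCoeff_conjInf, conj_conj]
  rcases lt_or_ge k 0 with hk | hk
  · rw [hφ _ (by omega), mul_zero]
  · rw [hψ _ (by omega), zero_mul]

theorem memHinf_sub_smul_iff (φ ψ : Linf) (c : ℂ) :
    MemHinf (φ - c • ψ) ↔ ∀ i < 0, fourierCoeff φ i = c * fourierCoeff ψ i := by
  simp only [MemHinf, fourierCoeff_sub, fourierCoeff_smul, sub_eq_zero]

theorem memHinf_conjInf_sub_smul_iff (φ ψ : Linf) (c : ℂ) :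
    MemHinf (conjInf φ - conj c • conjInf ψ) ↔
      ∀ i > 0, fourierCoeff φ i = c * fourierCoeff ψ i := by
  simp only [MemHinf, fourierCoeff_sub, fourierCoeff_smul, fourierCoeff_conjInf, ← map_mul,
    ← map_sub, map_eq_zero, sub_eq_zero]
  constructor
  · intro h i hi
    simpa using h (-i) (by omega)
  · intro h n hn
    exact h (-n) (by omega)

theorem ae_eq_one_iff_fourierCoeff (ψ : Linf) :
    (ψ : Circ → ℂ) =ᵐ[μC] 1 ↔ ∀ d, fourierCoeff ψ d = if d = 0 then 1 else 0 := by
  constructor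
  · intro h d
    have h₁ : (1 : Circ → ℂ) = fourier 0 := funext fun t => (fourier_zero (x := t)).symm
    rw [fourierCoeff_congr_ae h, h₁, fourierCoeff_fourier, Pi.single_apply]
  · intro h
    have h₁ : toL2 ψ = e 0 := e.repr.injective <| lp.ext <| funext fun d => by
      rw [fourierBasis_repr, fourierCoeff_congr_ae (coeFn_toL2 ψ), h d, repr_e]
    filter_upwards [coeFn_toL2 ψ, coeFn_e 0] with t h₂ h₃
    rw [← h₂, h₁, h₃, fourier_zero, Pi.one_apply]

theorem ae_norm_eq_one_iff_fourierCoeff (φ : Linf) :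
    (∀ᵐ t ∂μC, ‖φ t‖ = 1) ↔ ∀ d, fourierCoeff (φ ⊙ conjInf φ) d = if d = 0 then 1 else 0 := by
  rw [← ae_eq_one_iff_fourierCoeff, Filter.EventuallyEq]
  refine Filter.eventually_congr ?_
  filter_upwards [coeFn_mulInf φ (conjInf φ), coeFn_conjInf φ] with t h₁ h₂
  rw [h₁, h₂, mul_conj', Pi.one_apply, ← ofReal_pow, ofReal_eq_one,
    pow_eq_one_iff_of_nonneg (norm_nonneg _) two_ne_zero]

theorem repr_Pp (x : L2) (k : ℤ) : e.repr (Pp x) k = if 0 ≤ k then e.repr x k else 0 := by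
  split_ifs with hk
  · have he : e k ∈ Hardy := fun n hn => by
      rw [← fourierBasis_repr, repr_e, if_neg (by omega)]
    rw [e.repr_apply_apply, e.repr_apply_apply, show Pp = Hardy.starProjection from rfl,
      ← Submodule.inner_starProjection_left_eq_right, Submodule.starProjection_eq_self_iff.mpr he]
  · rw [fourierBasis_repr]
    exact (Hardy.orthogonalProjectionOnto x).2 k (by omega)

theorem repr_Pm (x : L2) (k : ℤ) : e.repr (Pm x) k = if 0 ≤ k then 0 else e.repr x k := by
  rw [Pm, sub_apply, id_apply, map_sub, lp.coeFn_sub, Pi.sub_apply, repr_Pp]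
  split_ifs <;> simp

theorem Pp_e (m : ℤ) : Pp (e m) = if 0 ≤ m then e m else 0 := by
  refine e.repr.injective (lp.ext (funext fun k => ?_))
  by_cases hm : 0 ≤ m
  · rw [if_pos hm, repr_Pp, repr_e]
    split_ifs <;> simp_all
  · rw [if_neg hm, repr_Pp, repr_e, map_zero]
    split_ifs <;> simp_all
    omega

theorem Pm_e (m : ℤ) : Pm (e m) = if 0 ≤ m then 0 else e m := by
  rw [Pm, sub_apply, id_apply, Pp_e]
  split_ifs <;> simp

section Rop

variable {f u g v : Linf}

theorem repr_Rop_e_of_nonneg {m : ℤ} (hm : 0 ≤ m) (k : ℤ) :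
    e.repr (Rop f u g v (e m)) k =
      if 0 ≤ k then fourierCoeff f (k - m) else fourierCoeff g (k - m) := by
  simp only [Rop, add_apply, comp_apply, Pp_e, Pm_e, if_pos hm, map_zero, add_zero, map_add,
    lp.coeFn_add, Pi.add_apply, repr_Pp, repr_Pm, repr_mul_e]
  split_ifs <;> simp

theorem repr_Rop_e_of_neg {m : ℤ} (hm : m < 0) (k : ℤ) :
    e.repr (Rop f u g v (e m)) k =
      if 0 ≤ k then fourierCoeff u (k - m) else fourierCoeff v (k - m) := by
  simp only [Rop, add_apply, comp_apply, Pp_e, Pm_e, if_neg (not_le.mpr hm), map_zero, zero_add,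
    map_add, lp.coeFn_add, Pi.add_apply, repr_Pp, repr_Pm, repr_mul_e]
  split_ifs <;> simp

theorem repr_Rop_e_shift {m k : ℤ} (hm : m ≠ -1) (hk : k ≠ -1) :
    e.repr (Rop f u g v (e (m + 1))) (k + 1) = e.repr (Rop f u g v (e m)) k := by
  have hk' : 0 ≤ k + 1 ↔ 0 ≤ k := by omega
  have hkm : k + 1 - (m + 1) = k - m := by ring
  rcases le_or_gt 0 m with hm₀ | hm₀
  · simp only [repr_Rop_e_of_nonneg (show 0 ≤ m + 1 by omega), repr_Rop_e_of_nonneg hm₀, hkm, hk']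
  · simp only [repr_Rop_e_of_neg (show m + 1 < 0 by omega), repr_Rop_e_of_neg hm₀, hkm, hk']

theorem exists_fourierCoeff_eq_mul_of_orthonormal (hR : Orthonormal ℂ (Rop f u g v ∘ e)) :
    ∃ c : ℂ, ‖c‖ = 1 ∧ (∀ i < 0, fourierCoeff f i = c * fourierCoeff g i) ∧
      ∀ i > 0, fourierCoeff u i = c * fourierCoeff v i := by
  obtain ⟨c, hc, hαβ⟩ := exists_norm_eq_one_forall_eq_mul (S := {i : ℤ | i ≠ 0})
    (α := fun i => e.repr (Rop f u g v (e (-i))) 0)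
    (β := fun i => e.repr (Rop f u g v (e (-1 - i))) (-1)) fun i hi j hj => by
      have h := hR.conj_repr_mul_eq_of_shift e (fun m k hm hk => repr_Rop_e_shift hm hk)
        (m := -1 - i) (n := -1 - j) (by simp_all) (by simp_all)
      simpa only [Function.comp_apply, show ∀ l : ℤ, -1 - l + 1 = -l from fun l => by ring,
        show (-1 : ℤ) + 1 = 0 by norm_num] using h
  refine ⟨c, hc, fun i hi => ?_, fun i hi => ?_⟩
  · have h := hαβ i hi.ne
    simp only [repr_Rop_e_of_nonneg (show 0 ≤ -i by omega),
      repr_Rop_e_of_nonneg (show 0 ≤ -1 - i by omega)] at h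
    simpa using h
  · have h := hαβ i hi.ne'
    simp only [repr_Rop_e_of_neg (show -i < 0 by omega),
      repr_Rop_e_of_neg (show -1 - i < 0 by omega)] at h
    simpa using h

/-- The Fourier multiplier of `P₊ + c̄ P₋`. -/
def halfMultiplier (c : ℂ) (k : ℤ) : ℂ := if 0 ≤ k then 1 else conj c

theorem conj_halfMultiplier_mul_self {c : ℂ} (hc : ‖c‖ = 1) (k : ℤ) :
    conj (halfMultiplier c k) * halfMultiplier c k = 1 := by
  unfold halfMultiplier
  split_ifs
  · simp
  · rw [conj_conj, mul_conj', hc]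
    simp

theorem repr_Rop_e_of_nonneg_eq_mul {c : ℂ} (hc : ‖c‖ = 1)
    (hfg : ∀ i < 0, fourierCoeff f i = c * fourierCoeff g i) {m : ℤ} (hm : 0 ≤ m) (k : ℤ) :
    e.repr (Rop f u g v (e m)) k = halfMultiplier c k * e.repr (mul f (e m)) k := by
  rw [repr_Rop_e_of_nonneg hm, repr_mul_e, halfMultiplier]
  split_ifs with hk
  · rw [one_mul]
  · rw [hfg _ (by omega), ← mul_assoc, conj_mul', hc]
    simp

theorem repr_Rop_e_of_neg_eq_mul {c : ℂ} (hc : ‖c‖ = 1)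
    (huv : ∀ i > 0, fourierCoeff u i = c * fourierCoeff v i) {m : ℤ} (hm : m < 0) (k : ℤ) :
    e.repr (Rop f u g v (e m)) k = c * halfMultiplier c k * e.repr (mul v (e m)) k := by
  rw [repr_Rop_e_of_neg hm, repr_mul_e, halfMultiplier]
  split_ifs with hk
  · rw [huv _ (by omega), mul_one]
  · rw [mul_conj', hc]
    simp

theorem inner_Rop_e_of_nonneg_of_nonneg {c : ℂ} (hc : ‖c‖ = 1)
    (hfg : ∀ i < 0, fourierCoeff f i = c * fourierCoeff g i) {m n : ℤ} (hm : 0 ≤ m) (hn : 0 ≤ n) :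
    ⟪Rop f u g v (e m), Rop f u g v (e n)⟫_ℂ = fourierCoeff (f ⊙ conjInf f) (m - n) := by
  rw [e.inner_eq_mul_inner_of_repr (conj_halfMultiplier_mul_self hc)
    (repr_Rop_e_of_nonneg_eq_mul hc hfg hm) (repr_Rop_e_of_nonneg_eq_mul hc hfg hn), one_mul,
    inner_mul_e_mul_e]

theorem inner_Rop_e_of_neg_of_neg {c : ℂ} (hc : ‖c‖ = 1)
    (huv : ∀ i > 0, fourierCoeff u i = c * fourierCoeff v i) {m n : ℤ} (hm : m < 0) (hn : n < 0) :
    ⟪Rop f u g v (e m), Rop f u g v (e n)⟫_ℂ = fourierCoeff (v ⊙ conjInf v) (m - n) := by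
  rw [e.inner_eq_mul_inner_of_repr (κ := 1) (fun k => ?_) (repr_Rop_e_of_neg_eq_mul hc huv hm)
    (repr_Rop_e_of_neg_eq_mul hc huv hn), one_mul, inner_mul_e_mul_e]
  rw [map_mul, mul_mul_mul_comm, conj_halfMultiplier_mul_self hc, conj_mul', hc]
  simp

theorem inner_Rop_e_of_neg_of_nonneg {c : ℂ} (hc : ‖c‖ = 1)
    (hfg : ∀ i < 0, fourierCoeff f i = c * fourierCoeff g i)
    (huv : ∀ i > 0, fourierCoeff u i = c * fourierCoeff v i) {m n : ℤ} (hm : m < 0) (hn : 0 ≤ n) :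
    ⟪Rop f u g v (e m), Rop f u g v (e n)⟫_ℂ = conj c * fourierCoeff (f ⊙ conjInf v) (m - n) := by
  rw [e.inner_eq_mul_inner_of_repr (fun k => ?_) (repr_Rop_e_of_neg_eq_mul hc huv hm)
    (repr_Rop_e_of_nonneg_eq_mul hc hfg hn), inner_mul_e_mul_e]
  rw [map_mul, mul_assoc, conj_halfMultiplier_mul_self hc, mul_one]

theorem orthonormal_Rop_iff {c : ℂ} (hc : ‖c‖ = 1)
    (hfg : ∀ i < 0, fourierCoeff f i = c * fourierCoeff g i)
    (huv : ∀ i > 0, fourierCoeff u i = c * fourierCoeff v i) :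
    Orthonormal ℂ (Rop f u g v ∘ e) ↔
      (∀ᵐ t ∂μC, ‖f t‖ = 1) ∧ (∀ᵐ t ∂μC, ‖v t‖ = 1) ∧ MemHinf (f ⊙ conjInf v) := by
  have hpp {m n : ℤ} (hm : 0 ≤ m) (hn : 0 ≤ n) :=
    inner_Rop_e_of_nonneg_of_nonneg (u := u) (v := v) hc hfg hm hn
  have hmm {m n : ℤ} (hm : m < 0) (hn : n < 0) :=
    inner_Rop_e_of_neg_of_neg (f := f) (g := g) hc huv hm hn
  have hmp {m n : ℤ} (hm : m < 0) (hn : 0 ≤ n) := inner_Rop_e_of_neg_of_nonneg hc hfg huv hm hn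
  rw [orthonormal_iff_ite, ae_norm_eq_one_iff_fourierCoeff, ae_norm_eq_one_iff_fourierCoeff]
  simp only [Function.comp_apply]
  constructor
  · intro h
    refine ⟨fun d => ?_, fun d => ?_, fun d hd => ?_⟩
    · have h' := h (max d 0) (max (-d) 0)
      rw [hpp (le_max_right _ _) (le_max_right _ _), show max d 0 - max (-d) 0 = d by omega] at h'
      simpa only [show max d 0 = max (-d) 0 ↔ d = 0 by omega] using h'
    · have h' := h (min d 0 - 1) (min (-d) 0 - 1)
      rw [hmm (by omega) (by omega), show min d 0 - 1 - (min (-d) 0 - 1) = d by omega] at h'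
      simpa only [show min d 0 - 1 = min (-d) 0 - 1 ↔ d = 0 by omega] using h'
    · have h' := h d 0
      rw [hmp hd le_rfl, sub_zero, if_neg hd.ne] at h'
      exact (mul_eq_zero.mp h').resolve_left (by simp [← norm_ne_zero_iff, hc])
  · rintro ⟨hf, hv, hfv⟩ m n
    rcases le_or_gt 0 m with hm | hm <;> rcases le_or_gt 0 n with hn | hn
    · simp only [hpp hm hn, hf, sub_eq_zero]
    · rw [← inner_conj_symm, hmp hn hm, hfv _ (by omega), mul_zero, map_zero, if_neg (by omega)]
    · rw [hmp hm hn, hfv _ (by omega), mul_zero, if_neg (by omega)]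
    · simp only [hmm hm hn, hv, sub_eq_zero]

end Rop

/-- The GSIO `R_{[[f,u],[g,v]]}` is an isometry on `L²` iff `|f| = |v| = 1`
a.e. and either (a) `f, g, ū, v̄ ∈ H^∞`, or (b) there is a unimodular constant `λ` with
`f − λg, ū − λ̄v̄, f·v̄ ∈ H^∞`. -/
theorem statement6 (f u g v : Linf) :
    (∀ x : L2, ‖Rop f u g v x‖ = ‖x‖) ↔
      ((∀ᵐ t ∂μC, ‖(f : Circ → ℂ) t‖ = 1) ∧ (∀ᵐ t ∂μC, ‖(v : Circ → ℂ) t‖ = 1)) ∧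
        ((MemHinf f ∧ MemHinf g ∧ MemHinf (conjInf u) ∧ MemHinf (conjInf v)) ∨
          (∃ lam : ℂ, ‖lam‖ = 1 ∧ MemHinf (f - lam • g) ∧
            MemHinf (conjInf u - conj lam • conjInf v) ∧ MemHinf (f ⊙ conjInf v))) := by
  rw [e.norm_map_eq_iff_orthonormal]
  constructor
  · intro hR
    obtain ⟨c, hc, hfg, huv⟩ := exists_fourierCoeff_eq_mul_of_orthonormal hR
    obtain ⟨hf, hv, hfv⟩ := (orthonormal_Rop_iff hc hfg huv).mp hR
    exact ⟨⟨hf, hv⟩, Or.inr ⟨c, hc, (memHinf_sub_smul_iff f g c).mpr hfg,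
      (memHinf_conjInf_sub_smul_iff u v c).mpr huv, hfv⟩⟩
  · rintro ⟨⟨hf, hv⟩, hcase⟩
    obtain ⟨c, hc, hfg, huv, hfv⟩ : ∃ c : ℂ, ‖c‖ = 1 ∧ MemHinf (f - c • g) ∧
        MemHinf (conjInf u - conj c • conjInf v) ∧ MemHinf (f ⊙ conjInf v) := by
      rcases hcase with ⟨hf', hg, hu, hv'⟩ | hb
      · exact ⟨1, norm_one, hf'.sub (hg.const_smul 1), hu.sub (hv'.const_smul _), hf'.mul hv'⟩
      · exact hb
    exact (orthonormal_Rop_iff hc ((memHinf_sub_smul_iff f g c).mp hfg)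
      ((memHinf_conjInf_sub_smul_iff u v c).mp huv)).mpr ⟨hf, hv, hfv⟩

end GSIO
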